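/- arXiv:1005.2102 — 4 statements merged into one kernel-verified Lean document; each statement's English description precedes it below -/
import Mathlib

section
/- With fb as above, the identities χ₁π̄₁(c̃₁κ̄₁ - c̃₃π̄₁) = fb(c̃₄(c̃₁κ̄₁ - c̃₃π̄₁)) and χ₁κ̄₁(c̃₁κ̄₁ - c̃₃π̄₁) = fb(c̃₂(c̃₁κ̄₁ - c̃₃π̄₁)) hold. -/
section TwistedDerivation

variable {A : Type*}

theorem map_mul_of_map_right_eq_zero [NonUnitalNonAssocSemiring A] {σ D : A → A}
    (hLeib : ∀ x y, D (x * y) = D x * y + σ x * D y) (x : A) {y : A} (hy : D y = 0) :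
    D (x * y) = D x * y := by
  rw [hLeib, hy, mul_zero, add_zero]

/-- Both terms map to `ψ * π * κ`. -/
theorem map_mul_sub_mul_eq_zero [Ring A] {F : Type*} [FunLike F A A] [AddMonoidHomClass F A A]
    {σ : A → A} {D : F} (hLeib : ∀ x y, D (x * y) = D x * y + σ x * D y)
    {a b ψ π κ : A} (ha : D a = ψ * π) (hb : D b = ψ * κ) (hπ : D π = 0) (hκ : D κ = 0)
    (hπκ : π * κ = κ * π) :
    D (a * κ - b * π) = 0 := by
  rw [map_sub, map_mul_of_map_right_eq_zero hLeib a hκ, map_mul_of_map_right_eq_zero hLeib b hπ,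
    ha, hb, mul_assoc, mul_assoc, hπκ, sub_self]

end TwistedDerivation

/-- Here `c̃₁,…,c̃₄` are `c 0,…,c 3` and `ψ₁, π̄₁, χ₁, κ̄₁` are `ψ, π, χ, κ`; `σ` is the parity
automorphism through which `fb` twists the Leibniz rule. -/
theorem stmt_7_general {A : Type*} [Ring A] [Algebra ℂ A]
    (σ : A →ₐ[ℂ] A) (fb : A →ₗ[ℂ] A)
    (c : Fin 4 → A) (ψ π χ κ : A)
    (hLeib : ∀ x y, fb (x * y) = fb x * y + σ x * fb y)
    (hcomm : ∀ x ∈ ({ψ, π, χ, κ} : Set A), ∀ y ∈ ({ψ, π, χ, κ} : Set A), x * y = y * x)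
    (hfb0 : fb (c 0) = ψ * π) (hfb1 : fb (c 1) = χ * κ)
    (hfb2 : fb (c 2) = ψ * κ) (hfb3 : fb (c 3) = χ * π)
    (hfbπ : fb π = 0) (hfbκ : fb κ = 0) :
    χ * π * (c 0 * κ - c 2 * π) = fb (c 3 * (c 0 * κ - c 2 * π)) ∧
    χ * κ * (c 0 * κ - c 2 * π) = fb (c 1 * (c 0 * κ - c 2 * π)) := by
  have hcycle : fb (c 0 * κ - c 2 * π) = 0 :=
    map_mul_sub_mul_eq_zero hLeib hfb0 hfb2 hfbπ hfbκ (hcomm π (by simp) κ (by simp))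
  rw [map_mul_of_map_right_eq_zero hLeib _ hcycle, map_mul_of_map_right_eq_zero hLeib _ hcycle,
    hfb3, hfb1]
  exact ⟨rfl, rfl⟩

/-- Identities (4D61a) for the odd differential `fb`
(with `c̃₁,…,c̃₄ = c 0,…,c 3` and `ψ₁, π̄₁, χ₁, κ̄₁ = ψ, π, χ, κ`):
`χ₁π̄₁(c̃₁κ̄₁ - c̃₃π̄₁) = fb (c̃₄(c̃₁κ̄₁ - c̃₃π̄₁))` and
`χ₁κ̄₁(c̃₁κ̄₁ - c̃₃π̄₁) = fb (c̃₂(c̃₁κ̄₁ - c̃₃π̄₁))`. -/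
theorem stmt_7 {A : Type*} [Ring A] [Algebra ℂ A]
    (σ : A →ₐ[ℂ] A) (fb : A →ₗ[ℂ] A)
    (c : Fin 4 → A) (ψ π χ κ : A)
    (hLeib : ∀ x y, fb (x * y) = fb x * y + σ x * fb y)
    (hσc : ∀ i, σ (c i) = - c i)
    (hσψ : σ ψ = ψ) (hσπ : σ π = π) (hσχ : σ χ = χ) (hσκ : σ κ = κ)
    (hanti : ∀ i j, c i * c j = -(c j * c i))
    (hcomm : ∀ x ∈ ({ψ, π, χ, κ} : Set A), ∀ y ∈ ({ψ, π, χ, κ} : Set A), x * y = y * x)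
    (hce : ∀ i, ∀ x ∈ ({ψ, π, χ, κ} : Set A), c i * x = x * c i)
    (hfb0 : fb (c 0) = ψ * π) (hfb1 : fb (c 1) = χ * κ)
    (hfb2 : fb (c 2) = ψ * κ) (hfb3 : fb (c 3) = χ * π)
    (hfbψ : fb ψ = 0) (hfbπ : fb π = 0) (hfbχ : fb χ = 0) (hfbκ : fb κ = 0) :
    χ * π * (c 0 * κ - c 2 * π) = fb (c 3 * (c 0 * κ - c 2 * π)) ∧
    χ * κ * (c 0 * κ - c 2 * π) = fb (c 1 * (c 0 * κ - c 2 * π)) :=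
  stmt_7_general σ fb c ψ π χ κ hLeib hcomm hfb0 hfb1 hfb2 hfb3 hfbπ hfbκ
end

section
/- With fb as above, 2χ₁(c̃₁κ̄₁ - c̃₃π̄₁) = (c̃₁χ₁κ̄₁ - c̃₃χ₁π̄₁ + c̃₂ψ₁π̄₁ - c̃₄ψ₁κ̄₁) + fb(c̃₃c̃₄ - c̃₁c̃₂). In particular, the cocycle 2χ₁(c̃₁κ̄₁ - c̃₃π̄₁) is cohomologous to the invariant cocycle c̃₁χ₁κ̄₁ - c̃₃χ₁π̄₁ + c̃₂ψ₁π̄₁ - c̃₄ψ₁κ̄₁. -/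
/-!
Expanding `fb (c̃₃c̃₄ - c̃₁c̃₂)` by the graded Leibniz rule, the sign from moving `fb` past an odd
generator turns `c̃₂ψ₁π̄₁ - c̃₄ψ₁κ̄₁` into its negative, so those terms cancel, while
`c̃₁χ₁κ̄₁ - c̃₃χ₁π̄₁` is doubled; odd generators commute with even ones, which gives the left side.
-/

section OddDerivation

variable {A : Type*} [Ring A] [Algebra ℂ A] {σ : A →ₐ[ℂ] A} {fb : A →ₗ[ℂ] A}

theorem map_mul_of_odd (hLeib : ∀ x y, fb (x * y) = fb x * y + σ x * fb y)
    {x : A} (hx : σ x = -x) (y : A) : fb (x * y) = fb x * y - x * fb y := by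
  rw [hLeib, hx, neg_mul, sub_eq_add_neg]

end OddDerivation

theorem stmt_8_general {A : Type*} [Ring A] [Algebra ℂ A]
    (σ : A →ₐ[ℂ] A) (fb : A →ₗ[ℂ] A)
    (c : Fin 4 → A) (ψ π χ κ : A)
    (hLeib : ∀ x y, fb (x * y) = fb x * y + σ x * fb y)
    (hσc : ∀ i, σ (c i) = - c i)
    (hce : ∀ i, ∀ x ∈ ({ψ, π, χ, κ} : Set A), c i * x = x * c i)
    (hfb0 : fb (c 0) = ψ * π) (hfb1 : fb (c 1) = χ * κ)
    (hfb2 : fb (c 2) = ψ * κ) (hfb3 : fb (c 3) = χ * π) :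
    (2 : ℂ) • (χ * (c 0 * κ - c 2 * π)) =
      (c 0 * (χ * κ) - c 2 * (χ * π) + c 1 * (ψ * π) - c 3 * (ψ * κ)) +
        fb (c 2 * c 3 - c 0 * c 1) := by
  have hc : ∀ i, ∀ x ∈ ({ψ, π, χ, κ} : Set A), Commute (c i) x := hce
  have hfb : fb (c 2 * c 3 - c 0 * c 1) =
      ψ * κ * c 3 - c 2 * (χ * π) - (ψ * π * c 1 - c 0 * (χ * κ)) := by
    rw [map_sub, map_mul_of_odd hLeib (hσc 2), map_mul_of_odd hLeib (hσc 0), hfb0, hfb1, hfb2,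
      hfb3]
  have h3 : ψ * κ * c 3 = c 3 * (ψ * κ) :=
    ((hc 3 ψ (by simp)).mul_right (hc 3 κ (by simp))).eq.symm
  have h1 : ψ * π * c 1 = c 1 * (ψ * π) :=
    ((hc 1 ψ (by simp)).mul_right (hc 1 π (by simp))).eq.symm
  have h0 : χ * (c 0 * κ) = c 0 * (χ * κ) := ((hc 0 χ (by simp)).left_comm κ).symm
  have h2 : χ * (c 2 * π) = c 2 * (χ * π) := ((hc 2 χ (by simp)).left_comm π).symm
  rw [hfb, h3, h1, mul_sub, h0, h2]
  module

/-- Identity (4D61b):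
`2χ₁(c̃₁κ̄₁ - c̃₃π̄₁) = (c̃₁χ₁κ̄₁ - c̃₃χ₁π̄₁ + c̃₂ψ₁π̄₁ - c̃₄ψ₁κ̄₁) + fb (c̃₃c̃₄ - c̃₁c̃₂)`,
so the cocycle `2χ₁(c̃₁κ̄₁ - c̃₃π̄₁)` is cohomologous to the invariant cocycle
`c̃₁χ₁κ̄₁ - c̃₃χ₁π̄₁ + c̃₂ψ₁π̄₁ - c̃₄ψ₁κ̄₁`. -/
theorem stmt_8 {A : Type*} [Ring A] [Algebra ℂ A]
    (σ : A →ₐ[ℂ] A) (fb : A →ₗ[ℂ] A)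
    (c : Fin 4 → A) (ψ π χ κ : A)
    (hLeib : ∀ x y, fb (x * y) = fb x * y + σ x * fb y)
    (hσc : ∀ i, σ (c i) = - c i)
    (hσψ : σ ψ = ψ) (hσπ : σ π = π) (hσχ : σ χ = χ) (hσκ : σ κ = κ)
    (hanti : ∀ i j, c i * c j = -(c j * c i))
    (hcomm : ∀ x ∈ ({ψ, π, χ, κ} : Set A), ∀ y ∈ ({ψ, π, χ, κ} : Set A), x * y = y * x)
    (hce : ∀ i, ∀ x ∈ ({ψ, π, χ, κ} : Set A), c i * x = x * c i)
    (hfb0 : fb (c 0) = ψ * π) (hfb1 : fb (c 1) = χ * κ)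
    (hfb2 : fb (c 2) = ψ * κ) (hfb3 : fb (c 3) = χ * π)
    (hfbψ : fb ψ = 0) (hfbπ : fb π = 0) (hfbχ : fb χ = 0) (hfbκ : fb κ = 0) :
    (2 : ℂ) • (χ * (c 0 * κ - c 2 * π)) =
      (c 0 * (χ * κ) - c 2 * (χ * π) + c 1 * (ψ * π) - c 3 * (ψ * κ)) +
        fb (c 2 * c 3 - c 0 * c 1) :=
  stmt_8_general σ fb c ψ π χ κ hLeib hσc hce hfb0 hfb1 hfb2 hfb3
end

section
/- With D₁, D₂ as in Lemma 4D1, every D₁- and D₂-closed element of c-degree 3 or 4 in Ω⁻ vanishes: if ω = Σ c̃ₐc̃_bc̃_c f_{abc}(π̄₁,κ̄₁) (degree 3 in the c̃) or ω = c̃₁c̃₂c̃₃c̃₄ f(π̄₁,κ̄₁) (degree 4), and D₁ω = D₂ω = 0, then ω = 0. -/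
open MvPolynomial

set_option maxHeartbeats 1000000
set_option synthInstance.maxHeartbeats 400000

/-- The ℂ-algebra of polynomials in the two even ghost variables
`π̄₁ = X 0`, `κ̄₁ = X 1`. -/
noncomputable abbrev SAC.R2 : Type := MvPolynomial (Fin 2) ℂ

/-- `Ω⁻`: the free graded-commutative algebra on the four odd translation
ghosts over `ℂ[π̄₁, κ̄₁]`, realized as the exterior algebra of the free module
of rank 4. -/
noncomputable abbrev SAC.Omega : Type := ExteriorAlgebra SAC.R2 (Fin 4 → SAC.R2)

/-- The odd translation ghosts `c̃₁, c̃₂, c̃₃, c̃₄ = ctil 0, …, ctil 3`. -/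
noncomputable def SAC.ctil (i : Fin 4) : SAC.Omega :=
  ExteriorAlgebra.ι SAC.R2 (Pi.single i 1)

/-- The linear functional on the rank-4 free module determined by the
coefficient vector `w`. -/
noncomputable def SAC.dual (w : Fin 4 → SAC.R2) :
    Module.Dual SAC.R2 (Fin 4 → SAC.R2) :=
  LinearMap.lsum SAC.R2 (fun _ : Fin 4 => SAC.R2) SAC.R2
    (fun i => LinearMap.toSpanSingleton SAC.R2 SAC.R2 (w i))

/-- `D₁ = π̄₁ ∂/∂c̃₁ + κ̄₁ ∂/∂c̃₃`, as the odd derivation (interior product)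
contracting with the functional `c̃₁ ↦ π̄₁, c̃₃ ↦ κ̄₁`. -/
noncomputable def SAC.D1 : SAC.Omega →ₗ[SAC.R2] SAC.Omega :=
  CliffordAlgebra.contractLeft (Q := (0 : QuadraticForm SAC.R2 (Fin 4 → SAC.R2)))
    (SAC.dual ![X 0, 0, X 1, 0])

/-- `D₂ = κ̄₁ ∂/∂c̃₂ + π̄₁ ∂/∂c̃₄`. -/
noncomputable def SAC.D2 : SAC.Omega →ₗ[SAC.R2] SAC.Omega :=
  CliffordAlgebra.contractLeft (Q := (0 : QuadraticForm SAC.R2 (Fin 4 → SAC.R2)))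
    (SAC.dual ![0, X 1, 0, X 0])

/-!
The derivations `∂/∂c̃ᵢ` anticommute and square to zero, so reading off a coefficient of `D₁ω` or
`D₂ω` picks up a single coefficient of `ω`: e.g. since `D₁ = π̄₁ ∂/∂c̃₁ + κ̄₁ ∂/∂c̃₃`, the
`c̃₁c̃₂`-coefficient of `D₁ω` is `κ̄₁` times the `c̃₁c̃₂c̃₃`-coefficient of `ω`. Closedness under
`D₁` and `D₂` therefore kills `π̄₁` or `κ̄₁` times each of the four coefficients of a 3-form, and
`π̄₁` times the coefficient of a 4-form; as `ℂ[π̄₁, κ̄₁]` is a domain, all of them vanish.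
-/

theorem MvPolynomial.eq_zero_of_X_mul_eq_zero {σ R : Type*} [CommRing R] [IsDomain R] {i : σ}
    {p : MvPolynomial σ R} (h : X i * p = 0) : p = 0 :=
  (mul_eq_zero.1 h).resolve_left (X_ne_zero i)

namespace SAC

lemma dual_apply (w v : Fin 4 → R2) : dual w v = ∑ i, w i * v i := by
  simp [dual, LinearMap.lsum_apply, mul_comm]

/-- `∂/∂c̃ᵢ`, the odd derivation dual to `c̃ᵢ`. -/
noncomputable def ctilDeriv (i : Fin 4) : Omega →ₗ[R2] Omega :=
  CliffordAlgebra.contractLeft (Q := (0 : QuadraticForm R2 (Fin 4 → R2))) (dual (Pi.single i 1))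

lemma D1_eq : D1 = (X 0 : R2) • ctilDeriv 0 + (X 1 : R2) • ctilDeriv 2 := by
  have : dual ![X 0, 0, X 1, 0] =
      (X 0 : R2) • dual (Pi.single 0 1) + (X 1 : R2) • dual (Pi.single 2 1) := by
    ext v
    simp [dual_apply, Fin.sum_univ_four]
  rw [D1, this, map_add, map_smul, map_smul]
  rfl

lemma D2_eq : D2 = (X 1 : R2) • ctilDeriv 1 + (X 0 : R2) • ctilDeriv 3 := by
  have : dual ![0, X 1, 0, X 0] =
      (X 1 : R2) • dual (Pi.single 1 1) + (X 0 : R2) • dual (Pi.single 3 1) := by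
    ext v
    simp [dual_apply, Fin.sum_univ_four]
  rw [D2, this, map_add, map_smul, map_smul]
  rfl

lemma dual_single_single (i j : Fin 4) :
    dual (Pi.single i 1) (Pi.single j 1) = if i = j then 1 else 0 := by
  simp [dual_apply, Pi.single_apply, eq_comm]

lemma ctilDeriv_ctil (i j : Fin 4) : ctilDeriv i (ctil j) = if i = j then 1 else 0 := by
  rw [ctilDeriv, ctil, CliffordAlgebra.contractLeft_ι, dual_single_single]
  split_ifs <;> simp

lemma ctilDeriv_ctil_mul (i j : Fin 4) (x : Omega) :
    ctilDeriv i (ctil j * x) = (if i = j then x else 0) - ctil j * ctilDeriv i x := by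
  rw [ctilDeriv, ctil, CliffordAlgebra.contractLeft_ι_mul, dual_single_single]
  split_ifs <;> simp

lemma ctilDeriv_ctilDeriv_self (i : Fin 4) (x : Omega) : ctilDeriv i (ctilDeriv i x) = 0 :=
  CliffordAlgebra.contractLeft_contractLeft _ x

lemma ctilDeriv_comm (i j : Fin 4) (x : Omega) :
    ctilDeriv i (ctilDeriv j x) = -ctilDeriv j (ctilDeriv i x) :=
  CliffordAlgebra.contractLeft_comm _ _ x

/-- The coefficient of `c̃_{i₁} ⋯ c̃_{iₙ}` in `ω`, for `s = [i₁, …, iₙ]`. -/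
noncomputable def coeff (s : List (Fin 4)) : Omega →ₗ[R2] R2 :=
  ExteriorAlgebra.algebraMapInv.toLinearMap ∘ₗ s.foldl (fun φ i => ctilDeriv i ∘ₗ φ) LinearMap.id

lemma coeff_apply (s : List (Fin 4)) (ω : Omega) :
    coeff s ω = ExteriorAlgebra.algebraMapInv (s.foldl (fun x i => ctilDeriv i x) ω) := by
  suffices ∀ φ : Omega →ₗ[R2] Omega, (s.foldl (fun φ i => ctilDeriv i ∘ₗ φ) φ) ω =
      s.foldl (fun x i => ctilDeriv i x) (φ ω) from congrArg _ (this LinearMap.id)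
  induction s with
  | nil => exact fun _ => rfl
  | cons i s ih => exact fun φ => ih (ctilDeriv i ∘ₗ φ)

lemma coeff_D1_01 (ω : Omega) : coeff [0, 1] (D1 ω) = X 1 * coeff [0, 1, 2] ω := by
  simp [coeff_apply, D1_eq, ctilDeriv_comm 0 2, ctilDeriv_comm 1 2, ctilDeriv_ctilDeriv_self]

lemma coeff_D1_23 (ω : Omega) : coeff [2, 3] (D1 ω) = X 0 * coeff [0, 2, 3] ω := by
  simp [coeff_apply, D1_eq, ctilDeriv_ctilDeriv_self]

lemma coeff_D2_01 (ω : Omega) : coeff [0, 1] (D2 ω) = X 0 * coeff [0, 1, 3] ω := by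
  simp [coeff_apply, D2_eq, ctilDeriv_comm 0 1, ctilDeriv_comm 0 3, ctilDeriv_comm 1 3,
    ctilDeriv_ctilDeriv_self]

lemma coeff_D2_23 (ω : Omega) : coeff [2, 3] (D2 ω) = X 1 * coeff [1, 2, 3] ω := by
  simp [coeff_apply, D2_eq, ctilDeriv_comm 2 3, ctilDeriv_ctilDeriv_self]

lemma coeff_D1_123 (ω : Omega) : coeff [1, 2, 3] (D1 ω) = X 0 * coeff [0, 1, 2, 3] ω := by
  simp [coeff_apply, D1_eq, ctilDeriv_comm 1 2, ctilDeriv_ctilDeriv_self]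

lemma ctil_mul_self (i : Fin 4) : ctil i * ctil i = 0 := ExteriorAlgebra.ι_sq_zero _

lemma ctil_mul_ctil_mul_self (i : Fin 4) (x : Omega) : ctil i * (ctil i * x) = 0 := by
  rw [← mul_assoc, ctil_mul_self, zero_mul]

lemma ctil_mul_ctil_comm (i j : Fin 4) : ctil i * ctil j = -(ctil j * ctil i) :=
  eq_neg_of_add_eq_zero_left (ExteriorAlgebra.ι_add_mul_swap _ _)

lemma ctil_mul_ctil_mul_comm (i j : Fin 4) (x : Omega) :
    ctil i * (ctil j * x) = -(ctil j * (ctil i * x)) := by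
  rw [← mul_assoc, ctil_mul_ctil_comm, neg_mul, mul_assoc]

noncomputable def threeForm (g : Fin 4 → R2) : Omega :=
  g 0 • (ctil 0 * ctil 1 * ctil 2) + g 1 • (ctil 0 * ctil 1 * ctil 3) +
    g 2 • (ctil 0 * ctil 2 * ctil 3) + g 3 • (ctil 1 * ctil 2 * ctil 3)

noncomputable def altCoeff (f : Fin 4 → Fin 4 → Fin 4 → R2) (a b c : Fin 4) : R2 :=
  f a b c - f a c b - f b a c + f b c a + f c a b - f c b a

lemma sum_smul_ctil_mul_ctil_mul_ctil (f : Fin 4 → Fin 4 → Fin 4 → R2) :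
    ∑ a, ∑ b, ∑ c, f a b c • (ctil a * ctil b * ctil c) =
      threeForm ![altCoeff f 0 1 2, altCoeff f 0 1 3, altCoeff f 0 2 3, altCoeff f 1 2 3] := by
  -- the hypothesis `j < i` only orients the rewriting towards increasing indices
  have sort : ∀ i j : Fin 4, j < i → ctil i * ctil j = -(ctil j * ctil i) :=
    fun i j _ => ctil_mul_ctil_comm i j
  have sort' : ∀ i j : Fin 4, j < i → ∀ x, ctil i * (ctil j * x) = -(ctil j * (ctil i * x)) :=
    fun i j _ => ctil_mul_ctil_mul_comm i j
  simp [threeForm, altCoeff, Fin.sum_univ_four, mul_assoc, ctil_mul_self, ctil_mul_ctil_mul_self,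
    sort, sort']
  module

lemma coeff_threeForm (g : Fin 4 → R2) :
    coeff [0, 1, 2] (threeForm g) = g 0 ∧ coeff [0, 1, 3] (threeForm g) = g 1 ∧
      coeff [0, 2, 3] (threeForm g) = g 2 ∧ coeff [1, 2, 3] (threeForm g) = g 3 := by
  simp [coeff_apply, threeForm, mul_assoc, ctilDeriv_ctil_mul, ctilDeriv_ctil]

lemma coeff_top : coeff [0, 1, 2, 3] (ctil 0 * ctil 1 * ctil 2 * ctil 3) = 1 := by
  simp [coeff_apply, mul_assoc, ctilDeriv_ctil_mul, ctilDeriv_ctil]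

theorem threeForm_eq_zero_of_closed (g : Fin 4 → R2) (h1 : D1 (threeForm g) = 0)
    (h2 : D2 (threeForm g) = 0) : threeForm g = 0 := by
  obtain ⟨c012, c013, c023, c123⟩ := coeff_threeForm g
  have g0 : g 0 = 0 := eq_zero_of_X_mul_eq_zero (by rw [← c012, ← coeff_D1_01, h1, map_zero])
  have g1 : g 1 = 0 := eq_zero_of_X_mul_eq_zero (by rw [← c013, ← coeff_D2_01, h2, map_zero])
  have g2 : g 2 = 0 := eq_zero_of_X_mul_eq_zero (by rw [← c023, ← coeff_D1_23, h1, map_zero])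
  have g3 : g 3 = 0 := eq_zero_of_X_mul_eq_zero (by rw [← c123, ← coeff_D2_23, h2, map_zero])
  simp [threeForm, g0, g1, g2, g3]

theorem eq_zero_of_D1_smul_top_eq_zero (f : R2)
    (h : D1 (f • (ctil 0 * ctil 1 * ctil 2 * ctil 3)) = 0) : f = 0 := by
  refine eq_zero_of_X_mul_eq_zero (i := 0) ?_
  rw [← mul_one f, ← coeff_top, ← smul_eq_mul f, ← map_smul, ← coeff_D1_123, h, map_zero]

end SAC

open SAC

/-- every `D₁`- and `D₂`-closed element of c-degree 3 or 4 in
`Ω⁻` vanishes. -/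
theorem stmt_11 (ω : SAC.Omega)
    (hdeg :
      (∃ f : Fin 4 → Fin 4 → Fin 4 → SAC.R2,
        ω = ∑ a, ∑ b, ∑ c', f a b c' • (SAC.ctil a * SAC.ctil b * SAC.ctil c')) ∨
      (∃ f : SAC.R2,
        ω = f • (SAC.ctil 0 * SAC.ctil 1 * SAC.ctil 2 * SAC.ctil 3)))
    (h1 : SAC.D1 ω = 0) (h2 : SAC.D2 ω = 0) :
    ω = 0 := by
  rcases hdeg with ⟨f, rfl⟩ | ⟨f, rfl⟩
  · rw [sum_smul_ctil_mul_ctil_mul_ctil] at h1 h2 ⊢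
    exact threeForm_eq_zero_of_closed _ h1 h2
  · rw [eq_zero_of_D1_smul_top_eq_zero f h1, zero_smul]
end

section
/- For N > 2, fb(Θ₁₁ - Σ_{i=2}^{N} Θᵢᵢ) = 2i Σ_{i=2}^{N} Σ_{j=2}^{N} (ξᵢ⁺·ξⱼ⁺)(ξᵢ⁻·ξⱼ⁻). In particular, the right-hand side is a nonzero polynomial purely in the ghosts ξ₂,…,ξ_N which is nevertheless fb-exact. -/
/-!
In each row `fb Θᵢᵢ = -2i Σₖ (ξᵢ⁻·ξₖ⁻)(ξᵢ⁺·ξₖ⁺)` with `i ≠ 1`, split off the term `k = 1`. By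
antisymmetry of both factors it equals `(ξ₁⁻·ξᵢ⁻)(ξ₁⁺·ξᵢ⁺)`, so these cross terms add up to
`fb Θ₁₁` (its diagonal term vanishes, `A` being 2-torsion free) and cancel it. The paper's index
`1` is `⟨0, _⟩ : Fin N`.
-/

open Finset

theorem sum_row_sub_sum_rows_erase_of_antisymm {R ι : Type*} [Ring R] [IsAddTorsionFree R]
    [Fintype ι] [DecidableEq ι] (dm dp : ι → ι → R)
    (hdm : ∀ i j, dm i j = -dm j i) (hdp : ∀ i j, dp i j = -dp j i) (a : ι) :
    ∑ k, dm a k * dp a k - ∑ i ∈ univ.erase a, ∑ k, dm i k * dp i k =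
      -∑ i ∈ univ.erase a, ∑ k ∈ univ.erase a, dm i k * dp i k := by
  have hdiag : dm a a = 0 := self_eq_neg.mp (hdm a a)
  have hrow : ∑ k, dm a k * dp a k = ∑ i ∈ univ.erase a, dm a i * dp a i := by
    rw [← add_sum_erase _ _ (mem_univ a), hdiag, zero_mul, zero_add]
  have hsplit : ∀ i, ∑ k, dm i k * dp i k =
      dm a i * dp a i + ∑ k ∈ univ.erase a, dm i k * dp i k := fun i => by
    rw [← add_sum_erase _ _ (mem_univ a), hdm i a, hdp i a, neg_mul_neg]
  rw [hrow]
  simp only [hsplit]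
  rw [sum_add_distrib, sub_add_eq_sub_sub, sub_self, zero_sub]

/-- for `N > 2`, with `fb Θᵢⱼ = -2i Σ_k (ξᵢ⁻·ξₖ⁻)(ξⱼ⁺·ξₖ⁺)`,
antisymmetry of the products and commutativity of the even elements,
`fb (Θ₁₁ - Σ_{i=2}^{N} Θᵢᵢ) = 2i Σ_{i=2}^{N} Σ_{j=2}^{N} (ξᵢ⁺·ξⱼ⁺)(ξᵢ⁻·ξⱼ⁻)`:
a polynomial purely in the ghosts `ξ₂, …, ξ_N` which is `fb`-exact.
(Index `1` is `0`; the sum over `i = 2, …, N` is over `i ≠ 0`.) -/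
theorem stmt_16 {A : Type*} [Ring A] [Algebra ℂ A] (N : ℕ) (hN : 2 < N)
    (fb : A →ₗ[ℂ] A)
    (dm dp : Fin N → Fin N → A) (Θ : Fin N → Fin N → A)
    (hdm : ∀ i j, dm i j = -(dm j i)) (hdp : ∀ i j, dp i j = -(dp j i))
    (hcomm : ∀ i j k l, dm i j * dp k l = dp k l * dm i j)
    (hΘ : ∀ i j, fb (Θ i j) = (-(2 * Complex.I)) • ∑ k, dm i k * dp j k) :
    fb (Θ ⟨0, by omega⟩ ⟨0, by omega⟩ - ∑ i ∈ Finset.univ.erase ⟨0, by omega⟩, Θ i i) =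
      (2 * Complex.I) •
        ∑ i ∈ Finset.univ.erase ⟨0, by omega⟩, ∑ j ∈ Finset.univ.erase ⟨0, by omega⟩,
          dp i j * dm i j := by
  have : IsAddTorsionFree A := .of_isTorsionFree ℂ A
  simp only [map_sub, map_sum, hΘ, ← smul_sum, ← smul_sub, ← hcomm]
  rw [sum_row_sub_sum_rows_erase_of_antisymm dm dp hdm hdp, smul_neg, ← neg_smul, neg_neg]
end
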